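/- Let h : [0,∞) → ℝ be twice continuously differentiable with h(0) = 0, h'(0) < 0, attaining its global minimum at some t* > 0, and suppose h'' is increasing on [0, t*]. Then for all t ∈ [0, t*], h(t) ≤ t·h'(0)/2. -/

import Mathlib

/-!
Since `h''` is increasing, `h'` is convex on `[0, t*]`; as `h'(t*) = 0` at the interior minimum,
`h'` lies below its chord `h'(t) ≤ (1 - t/t*) h'(0)`. Integrating from `0` gives
`h(t) ≤ h'(0) (t - t²/(2t*))`, and `t - t²/(2t*) ≥ t/2` on `[0, t*]` while `h'(0) < 0`.
-/

open Set

lemma DifferentiableOn.differentiableAt_of_mem_Ici {f : ℝ → ℝ} {a x : ℝ}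
    (hf : DifferentiableOn ℝ f (Ici a)) (ha : DifferentiableAt ℝ f a) (hx : a ≤ x) :
    DifferentiableAt ℝ f x := by
  rcases hx.eq_or_lt with rfl | hlt
  · exact ha
  · exact (hf x hx).differentiableAt (Ici_mem_nhds hlt)

/-- `deriv f a` is the two-sided derivative, so differentiability at the endpoint is what lets
`deriv f` agree with `derivWithin f (Ici a)` on all of `Ici a`. -/
lemma ContDiffOn.deriv_Ici {f : ℝ → ℝ} {a : ℝ} {m n : WithTop ℕ∞}
    (hf : ContDiffOn ℝ n f (Ici a)) (ha : DifferentiableAt ℝ f a) (hmn : m + 1 ≤ n) :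
    ContDiffOn ℝ m (deriv f) (Ici a) := by
  have hdiff : DifferentiableOn ℝ f (Ici a) :=
    ((contDiffOn_succ_iff_derivWithin (uniqueDiffOn_Ici a)).1 (hf.of_le hmn)).1
  refine (hf.derivWithin (uniqueDiffOn_Ici a) hmn).congr fun x hx => ?_
  exact ((hdiff.differentiableAt_of_mem_Ici ha hx).derivWithin (uniqueDiffOn_Ici a x hx)).symm

lemma convexOn_Icc_of_monotoneOn_deriv {g : ℝ → ℝ} {a b : ℝ}
    (hg : DifferentiableOn ℝ g (Icc a b)) (hmono : MonotoneOn (deriv g) (Icc a b)) :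
    ConvexOn ℝ (Icc a b) g :=
  MonotoneOn.convexOn_of_deriv (convex_Icc a b) hg.continuousOn
    (by rw [interior_Icc]; exact hg.mono Ioo_subset_Icc_self)
    (by rw [interior_Icc]; exact hmono.mono Ioo_subset_Icc_self)

lemma ConvexOn.le_mul_left_of_right_eq_zero {g : ℝ → ℝ} {a b x : ℝ} (hab : a < b)
    (hg : ConvexOn ℝ (Icc a b) g) (hgb : g b = 0) (hx : x ∈ Icc a b) :
    g x ≤ (b - x) / (b - a) * g a := by
  have hba : 0 < b - a := sub_pos.mpr hab
  have hcomb : (b - x) / (b - a) * a + (x - a) / (b - a) * b = x := by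
    field_simp; ring
  have hsum : (b - x) / (b - a) + (x - a) / (b - a) = 1 := by
    field_simp; ring
  have := hg.2 (left_mem_Icc.mpr hab.le) (right_mem_Icc.mpr hab.le)
    (div_nonneg (sub_nonneg.mpr hx.2) hba.le) (div_nonneg (sub_nonneg.mpr hx.1) hba.le) hsum
  simpa only [smul_eq_mul, hcomb, hgb, mul_zero, add_zero] using this

lemma hasDerivAt_mul_sub_sq_div (c T x : ℝ) :
    HasDerivAt (fun t => c * (t - t ^ 2 / (2 * T))) (c * (1 - x / T)) x := by
  refine (((hasDerivAt_id' x).sub ((hasDerivAt_pow 2 x).div_const (2 * T))).const_mul c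
    ).congr_deriv ?_
  norm_num [mul_div_mul_left]

lemma le_mul_sub_sq_div_of_deriv_le {f : ℝ → ℝ} {c T : ℝ}
    (hf : ∀ x ∈ Icc 0 T, DifferentiableAt ℝ f x) (hf0 : f 0 = 0)
    (hbound : ∀ x ∈ Icc 0 T, deriv f x ≤ c * (1 - x / T)) :
    ∀ t ∈ Icc 0 T, f t ≤ c * (t - t ^ 2 / (2 * T)) :=
  image_le_of_deriv_right_le_deriv_boundary
    (fun x hx => (hf x hx).continuousAt.continuousWithinAt)
    (fun x hx => (hf x (Ico_subset_Icc_self hx)).hasDerivAt.hasDerivWithinAt)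
    (by simp [hf0])
    (fun x _ => (hasDerivAt_mul_sub_sq_div c T x).continuousAt.continuousWithinAt)
    (fun x _ => (hasDerivAt_mul_sub_sq_div c T x).hasDerivWithinAt)
    (fun x hx => hbound x (Ico_subset_Icc_self hx))

lemma mul_sub_sq_div_le_half {c T t : ℝ} (hc : c ≤ 0) (ht : t ∈ Icc 0 T) :
    c * (t - t ^ 2 / (2 * T)) ≤ t * c / 2 := by
  rcases ht.1.eq_or_lt with rfl | htpos
  · simp
  have hT : 0 < T := htpos.trans_le ht.2
  have hsq : t ^ 2 / (2 * T) ≤ t / 2 := by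
    rw [div_le_div_iff₀ (by positivity) two_pos]
    nlinarith [ht.2]
  nlinarith

theorem stmt_17 (h : ℝ → ℝ) (tstar : ℝ)
    (hsmooth : ContDiffOn ℝ 2 h (Set.Ici 0))
    (h0 : h 0 = 0) (h0' : deriv h 0 < 0) (htpos : 0 < tstar)
    (hmin : ∀ t : ℝ, 0 ≤ t → h tstar ≤ h t)
    (hmono : MonotoneOn (deriv (deriv h)) (Set.Icc 0 tstar)) :
    ∀ t ∈ Set.Icc (0:ℝ) tstar, h t ≤ t * deriv h 0 / 2 := by
  -- `deriv` is junk `0` where `h` is not differentiable, so `deriv h 0 ≠ 0` forces it at `0`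
  have hd0 : DifferentiableAt ℝ h 0 := by
    by_contra hnd
    exact h0'.ne (deriv_zero_of_not_differentiableAt hnd)
  have hdiff : ∀ x ∈ Icc 0 tstar, DifferentiableAt ℝ h x := fun x hx =>
    (hsmooth.differentiableOn (by norm_num)).differentiableAt_of_mem_Ici hd0 hx.1
  have hconv : ConvexOn ℝ (Icc 0 tstar) (deriv h) :=
    convexOn_Icc_of_monotoneOn_deriv
      (((hsmooth.deriv_Ici hd0 (by norm_num : (1 : WithTop ℕ∞) + 1 ≤ 2)).differentiableOn
        one_ne_zero).mono Icc_subset_Ici_self) hmono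
  have hcrit : deriv h tstar = 0 :=
    IsLocalMin.deriv_eq_zero (Filter.mem_of_superset (Ici_mem_nhds htpos) hmin)
  have hchord : ∀ x ∈ Icc 0 tstar, deriv h x ≤ deriv h 0 * (1 - x / tstar) := fun x hx => by
    have := hconv.le_mul_left_of_right_eq_zero htpos hcrit hx
    rwa [sub_zero, ← one_sub_div htpos.ne', mul_comm] at this
  intro t ht
  exact (le_mul_sub_sq_div_of_deriv_le hdiff h0 hchord t ht).trans
    (mul_sub_sq_div_le_half h0'.le ht)
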